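/- For every k ∈ ℕ and reals ε, δ > 0, there exists n ∈ ℕ such that for every finite set I with |I| > n there is a partition 2^I = a⁰ ∪ a¹ (disjoint) such that for every nonempty X ⊆ 2^I with |X| ≤ k, the quantity |⋂_{x∈X}(a⁰ + x)| / 2^{|I|} differs from 2^{-|X|} by less than δ. -/

import Mathlib

/-
Choose `a ⊆ G = 2^I` at random. For a fixed `X`, let `V` be the subgroup spanned by `X`, so
`|V| ≤ 2^|X|`. The condition `t - X ⊆ a` only involves `a` inside the coset `t + V`, so
`|⋂ₓ (a + x)|` is a sum of `|G/V|` independent, identically distributed contributions, one per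
coset, each bounded by `|V|` and with mean `|V| 2^{-|X|}`. A Chernoff bound then shows that
`|⋂ₓ (a + x)| / |G|` is `δ`-far from `2^{-|X|}` for at most a fraction
`2 exp(-δ² |G| / 2^{|X|+2})` of the sets `a`. There are at most `(k+1) |G|^k` sets `X` with
`|X| ≤ k`, which the exponential beats once `|G| = 2^|I|` is large, so some `a` avoids all these
bad events. Probabilities appear throughout as numbers of subsets.
-/

open scoped Classical

open Finset Real Filter Topology

lemma exp_le_one_add_add_sq {x : ℝ} (hx : |x| ≤ 1) : exp x ≤ 1 + x + x ^ 2 := by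
  have h := abs_le.mp (Real.exp_bound hx (n := 2) (by norm_num))
  simp only [Finset.sum_range_succ, Finset.sum_range_zero] at h
  norm_num at h
  nlinarith [sq_abs x, sq_nonneg x]

section Chernoff

variable {β Ω : Type*} [Fintype β] [DecidableEq β] [Fintype Ω] {g : Ω → ℝ} {B ρ : ℝ}

lemma sum_exp_mul_le (hg : ∑ b, g b = 0) (hgB : ∀ b, |g b| ≤ B) (hρ : |ρ| * B ≤ 1) :
    ∑ b, exp (ρ * g b) ≤ Fintype.card Ω * exp (ρ ^ 2 * B ^ 2) := by
  have hterm (b : Ω) : exp (ρ * g b) ≤ 1 + ρ * g b + ρ ^ 2 * B ^ 2 := by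
    have hsq : (ρ * g b) ^ 2 ≤ ρ ^ 2 * B ^ 2 := by
      rw [mul_pow]
      exact mul_le_mul_of_nonneg_left (sq_le_sq.mpr ((hgB b).trans (le_abs_self B)))
        (sq_nonneg ρ)
    have habs : |ρ * g b| ≤ 1 := by
      rw [abs_mul]
      exact (mul_le_mul_of_nonneg_left (hgB b) (abs_nonneg ρ)).trans hρ
    linarith [exp_le_one_add_add_sq habs]
  calc ∑ b, exp (ρ * g b) ≤ ∑ b, (1 + ρ * g b + ρ ^ 2 * B ^ 2) := sum_le_sum fun b _ => hterm b
    _ = Fintype.card Ω * (1 + ρ ^ 2 * B ^ 2) := by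
      rw [sum_add_distrib, sum_add_distrib, ← mul_sum, hg]
      simp only [sum_const, card_univ, nsmul_eq_mul]
      ring
    _ ≤ Fintype.card Ω * exp (ρ ^ 2 * B ^ 2) := by
      gcongr
      linarith [add_one_le_exp (ρ ^ 2 * B ^ 2)]

lemma sum_exp_mul_sum_le (hg : ∑ b, g b = 0) (hgB : ∀ b, |g b| ≤ B) (hρ : |ρ| * B ≤ 1) :
    ∑ ω : β → Ω, exp (ρ * ∑ j, g (ω j))
      ≤ (Fintype.card Ω * exp (ρ ^ 2 * B ^ 2)) ^ Fintype.card β := by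
  simp_rw [mul_sum, exp_sum]
  rw [← Fintype.prod_sum (fun (_ : β) b => exp (ρ * g b)), prod_const, card_univ]
  exact pow_le_pow_left₀ (sum_nonneg fun _ _ => (exp_pos _).le) (sum_exp_mul_le hg hgB hρ) _

lemma card_filter_sum_ge_le (hg : ∑ b, g b = 0) (hgB : ∀ b, |g b| ≤ B) (hρ0 : 0 ≤ ρ)
    (hρ : ρ * B ≤ 1) (s : ℝ) :
    (#{ω : β → Ω | s ≤ ∑ j, g (ω j)} : ℝ)
      ≤ Fintype.card Ω ^ Fintype.card β * exp (Fintype.card β * (ρ ^ 2 * B ^ 2) - ρ * s) := by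
  rw [← abs_of_nonneg hρ0] at hρ
  have hmarkov : (#{ω : β → Ω | s ≤ ∑ j, g (ω j)} : ℝ) * exp (ρ * s)
      ≤ ∑ ω : β → Ω, exp (ρ * ∑ j, g (ω j)) := by
    rw [← nsmul_eq_mul]
    refine (card_nsmul_le_sum _ _ _ fun ω hω => ?_).trans
      (sum_le_sum_of_subset_of_nonneg (subset_univ _) fun _ _ _ => (exp_pos _).le)
    exact exp_le_exp.mpr (mul_le_mul_of_nonneg_left (mem_filter.mp hω).2 hρ0)
  have hmgf := hmarkov.trans (sum_exp_mul_sum_le hg hgB hρ)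
  rw [mul_pow, ← exp_nat_mul] at hmgf
  rw [exp_sub, mul_div_assoc', le_div_iff₀ (exp_pos _)]
  exact hmgf

lemma card_filter_abs_sum_ge_le [Nonempty β] (hg : ∑ b, g b = 0) (hgB : ∀ b, |g b| ≤ B)
    (hB : 0 < B) {s : ℝ} (hs0 : 0 ≤ s) (hs : s ≤ 2 * Fintype.card β * B) :
    (#{ω : β → Ω | s ≤ |∑ j, g (ω j)|} : ℝ)
      ≤ 2 * Fintype.card Ω ^ Fintype.card β * exp (-s ^ 2 / (4 * Fintype.card β * B ^ 2)) := by
  have hβ : (0 : ℝ) < Fintype.card β := by exact_mod_cast Fintype.card_pos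
  -- the minimiser of the Chernoff exponent `|β| ρ² B² - ρ s`
  set ρ := s / (2 * Fintype.card β * B ^ 2)
  have hρ0 : 0 ≤ ρ := by positivity
  have hρ : ρ * B ≤ 1 := by
    rw [div_mul_eq_mul_div, div_le_one (by positivity)]
    nlinarith
  have hexp : Fintype.card β * (ρ ^ 2 * B ^ 2) - ρ * s = -s ^ 2 / (4 * Fintype.card β * B ^ 2) := by
    simp only [ρ]
    field_simp
    ring
  have hneg : ∑ b, -g b = 0 := by rw [sum_neg_distrib, hg, neg_zero]
  have hnegB : ∀ b, |-g b| ≤ B := fun b => (abs_neg (g b)).trans_le (hgB b)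
  have hsplit : univ.filter (fun ω : β → Ω => s ≤ |∑ j, g (ω j)|)
      ⊆ univ.filter (fun ω : β → Ω => s ≤ ∑ j, g (ω j))
        ∪ univ.filter (fun ω : β → Ω => s ≤ ∑ j, -g (ω j)) := by
    intro ω hω
    simpa [sum_neg_distrib] using le_abs.mp (mem_filter.mp hω).2
  calc (#{ω : β → Ω | s ≤ |∑ j, g (ω j)|} : ℝ)
      ≤ #{ω : β → Ω | s ≤ ∑ j, g (ω j)} + #{ω : β → Ω | s ≤ ∑ j, -g (ω j)} := by
        exact_mod_cast (card_le_card hsplit).trans (card_union_le _ _)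
    _ ≤ 2 * Fintype.card Ω ^ Fintype.card β * exp (-s ^ 2 / (4 * Fintype.card β * B ^ 2)) := by
      have h1 := card_filter_sum_ge_le (β := β) hg hgB hρ0 hρ s
      have h2 := card_filter_sum_ge_le (β := β) hneg hnegB hρ0 hρ s
      rw [hexp] at h1 h2
      linarith

end Chernoff

lemma fintype_card_eq_card_quotient_mul_card {G : Type*} [AddCommGroup G] [Fintype G]
    (V : AddSubgroup G) :
    Fintype.card G = Fintype.card (G ⧸ V) * Fintype.card V := by
  simp only [← Nat.card_eq_fintype_card]
  exact AddSubgroup.card_eq_card_quotient_mul_card_addSubgroup V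

section Translates

variable {G : Type*} [AddCommGroup G] [Fintype G] [DecidableEq G]

noncomputable def interTranslatesCard (a X : Finset G) : ℕ := #{t | ∀ x ∈ X, t - x ∈ a}

lemma sum_interTranslatesCard (X : Finset G) :
    ∑ a : Finset G, interTranslatesCard a X = Fintype.card G * 2 ^ (Fintype.card G - #X) := by
  have hsupersets (t : G) : #{a : Finset G | ∀ x ∈ X, t - x ∈ a} = 2 ^ (Fintype.card G - #X) := by
    have : ({a : Finset G | ∀ x ∈ X, t - x ∈ a} : Finset _) = Icc (X.image (t - ·)) univ := by
      ext a
      simp [image_subset_iff]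
    rw [this, card_Icc_finset (subset_univ _), card_univ,
      card_image_of_injective _ (sub_right_injective)]
  simp only [interTranslatesCard, card_filter]
  rw [sum_comm]
  simp only [← card_filter, hsupersets, sum_const, card_univ, smul_eq_mul]

lemma sum_interTranslatesCard_sub (X : Finset G) :
    ∑ a : Finset G, ((interTranslatesCard a X : ℝ) - Fintype.card G * (1 / 2) ^ #X) = 0 := by
  have hsum : ∑ a : Finset G, (interTranslatesCard a X : ℝ)
      = Fintype.card G * 2 ^ (Fintype.card G - #X) := by
    exact_mod_cast sum_interTranslatesCard X
  rw [sum_sub_distrib, hsum, sum_const, card_univ, Fintype.card_finset, nsmul_eq_mul, Nat.cast_pow,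
    Nat.cast_two, pow_sub₀ _ two_ne_zero (card_le_univ X), one_div, inv_pow]
  ring

lemma abs_interTranslatesCard_sub_le (a X : Finset G) :
    |(interTranslatesCard a X : ℝ) - Fintype.card G * (1 / 2) ^ #X| ≤ Fintype.card G := by
  have hle : (interTranslatesCard a X : ℝ) ≤ Fintype.card G := by
    exact_mod_cast card_le_univ _
  have hG : (0 : ℝ) ≤ Fintype.card G := Nat.cast_nonneg _
  have hmean : Fintype.card G * (1 / 2 : ℝ) ^ #X ≤ Fintype.card G :=
    mul_le_of_le_one_right hG (pow_le_one₀ (by norm_num) (by norm_num))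
  rw [abs_le]
  constructor <;> linarith [(interTranslatesCard a X).cast_nonneg (α := ℝ),
    mul_nonneg hG (pow_nonneg (by norm_num : (0 : ℝ) ≤ 1 / 2) #X)]

noncomputable def interTranslatesDeviation (a X : Finset G) : ℝ :=
  (interTranslatesCard a X : ℝ) / Fintype.card G - (1 / 2) ^ #X

variable (V : AddSubgroup G)

noncomputable def cosetSlice (a : Finset G) (c : G ⧸ V) : Finset V := {v : V | c.out + (v : G) ∈ a}

lemma cosetSlice_bijective : Function.Bijective (cosetSlice V) := by
  refine (Fintype.bijective_iff_injective_and_card _).mpr ⟨fun a b hab => ?_, ?_⟩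
  · ext g
    have hg : -(g : G ⧸ V).out + g ∈ V := QuotientAddGroup.eq.mp (by simp)
    simpa [cosetSlice] using congrArg (fun ω => ⟨_, hg⟩ ∈ ω (g : G ⧸ V)) hab
  · rw [Fintype.card_finset, Fintype.card_fun, Fintype.card_finset, ← pow_mul, mul_comm,
      fintype_card_eq_card_quotient_mul_card V]

lemma card_filter_cosetSlice (P : (G ⧸ V → Finset V) → Prop) :
    #{a : Finset G | P (cosetSlice V a)} = #{ω | P ω} := by
  refine card_nbij (cosetSlice V) (fun a ha => by simpa using ha)
    (cosetSlice_bijective V).injective.injOn fun ω hω => ?_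
  obtain ⟨a, rfl⟩ := (cosetSlice_bijective V).surjective ω
  exact ⟨a, by simpa using hω, rfl⟩

lemma interTranslatesCard_eq_sum_cosetSlice {X : Finset G} (hX : ∀ x ∈ X, x ∈ V) (a : Finset G) :
    interTranslatesCard a X = ∑ c, interTranslatesCard (cosetSlice V a c) (X.subtype (· ∈ V)) := by
  rw [interTranslatesCard, card_eq_sum_card_fiberwise (f := ((↑) : G → G ⧸ V)) (t := univ)
    fun _ _ => mem_univ _]
  refine sum_congr rfl fun c _ => ?_
  rw [interTranslatesCard]
  symm
  refine card_bij (fun v _ => c.out + (v : G)) ?_ ?_ ?_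
  · intro v hv
    simp only [cosetSlice, mem_filter, mem_univ, true_and, mem_subtype] at hv
    simp only [mem_filter, mem_univ, true_and]
    refine ⟨fun x hx => ?_, by rw [QuotientAddGroup.mk_add_of_mem _ v.2, QuotientAddGroup.out_eq']⟩
    simpa [add_sub_assoc] using hv ⟨x, hX x hx⟩ hx
  · intro v _ w _ h
    exact Subtype.ext (add_left_cancel h)
  · intro t ht
    simp only [mem_filter, mem_univ, true_and] at ht
    have hv : -c.out + t ∈ V := QuotientAddGroup.eq.mp (by rw [QuotientAddGroup.out_eq', ht.2])
    refine ⟨⟨_, hv⟩, ?_, by simp⟩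
    simp only [cosetSlice, mem_filter, mem_univ, true_and, mem_subtype]
    intro y hy
    simpa [add_sub_assoc] using ht.1 y hy

lemma card_filter_abs_interTranslatesDeviation_ge_le {X : Finset G} (hX : ∀ x ∈ X, x ∈ V)
    {δ : ℝ} (hδ0 : 0 ≤ δ) (hδ2 : δ ≤ 2) :
    (#{a : Finset G | δ ≤ |interTranslatesDeviation a X|} : ℝ)
      ≤ 2 * 2 ^ Fintype.card G * exp (-δ ^ 2 * Fintype.card G / (4 * Fintype.card V)) := by
  set Y := X.subtype (· ∈ V)
  have hY : #Y = #X := by rw [card_subtype, filter_true_of_mem hX]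
  set g : Finset V → ℝ := fun b => interTranslatesCard b Y - Fintype.card V * (1 / 2) ^ #Y
  have hV : (0 : ℝ) < Fintype.card V := by exact_mod_cast Fintype.card_pos
  have hG : (0 : ℝ) < Fintype.card G := by exact_mod_cast Fintype.card_pos
  have hGV : (Fintype.card G : ℝ) = Fintype.card (G ⧸ V) * Fintype.card V := by
    exact_mod_cast fintype_card_eq_card_quotient_mul_card V
  have hcount (a : Finset G) : (interTranslatesCard a X : ℝ) - Fintype.card G * (1 / 2) ^ #X
      = ∑ c, g (cosetSlice V a c) := by
    simp only [g, sum_sub_distrib, sum_const, card_univ, nsmul_eq_mul,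
      interTranslatesCard_eq_sum_cosetSlice V hX a, Nat.cast_sum, hGV, hY]
    ring
  have hfilter : #{a : Finset G | δ ≤ |interTranslatesDeviation a X|}
      = #{a : Finset G | δ * Fintype.card G ≤ |∑ c, g (cosetSlice V a c)|} := by
    refine congrArg card (filter_congr fun a _ => ?_)
    rw [← hcount, ← le_div_iff₀ hG, ← abs_of_pos hG, ← abs_div, abs_of_pos hG, sub_div,
      mul_div_cancel_left₀ _ hG.ne', interTranslatesDeviation]
  have hs : δ * Fintype.card G ≤ 2 * Fintype.card (G ⧸ V) * Fintype.card V := by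
    rw [mul_assoc, ← hGV]
    exact mul_le_mul_of_nonneg_right hδ2 hG.le
  have hcard : (Fintype.card (Finset V) : ℝ) ^ Fintype.card (G ⧸ V) = 2 ^ Fintype.card G := by
    rw [Fintype.card_finset, Nat.cast_pow, Nat.cast_two, ← pow_mul, mul_comm,
      fintype_card_eq_card_quotient_mul_card V]
  have hexp : -(δ * Fintype.card G) ^ 2 / (4 * Fintype.card (G ⧸ V) * Fintype.card V ^ 2)
      = -δ ^ 2 * Fintype.card G / (4 * Fintype.card V) := by
    have hQ : (0 : ℝ) < Fintype.card (G ⧸ V) := by exact_mod_cast Fintype.card_pos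
    rw [hGV]
    field_simp
  have key := card_filter_abs_sum_ge_le (β := G ⧸ V) (sum_interTranslatesCard_sub Y)
    (abs_interTranslatesCard_sub_le · Y) hV (by positivity) hs
  rw [hcard, hexp] at key
  rw [hfilter, card_filter_cosetSlice V (fun ω => δ * Fintype.card G ≤ |∑ c, g (ω c)|)]
  exact key

end Translates

lemma card_filter_card_le_le {α : Type*} [Fintype α] [Nonempty α] (k : ℕ) :
    #{X : Finset α | #X ≤ k} ≤ (k + 1) * Fintype.card α ^ k := by
  calc #{X : Finset α | #X ≤ k}
      ≤ ∑ j ∈ range (k + 1), #(powersetCard j (univ : Finset α)) := by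
        refine (card_le_card fun X hX => ?_).trans card_biUnion_le
        simp only [mem_filter, mem_univ, true_and] at hX
        exact mem_biUnion.mpr ⟨#X, mem_range.mpr (Nat.lt_succ_of_le hX),
          mem_powersetCard.mpr ⟨subset_univ X, rfl⟩⟩
    _ ≤ ∑ _j ∈ range (k + 1), Fintype.card α ^ k := by
        refine sum_le_sum fun j hj => ?_
        rw [card_powersetCard, card_univ]
        exact (Nat.choose_le_pow _ _).trans
          (Nat.pow_le_pow_right Fintype.card_pos (Nat.lt_succ_iff.mp (mem_range.mp hj)))
    _ = (k + 1) * Fintype.card α ^ k := by rw [sum_const, card_range, smul_eq_mul]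

lemma card_span_le {G : Type*} [AddCommGroup G] [Module (ZMod 2) G] [Fintype G] (X : Finset G) :
    Fintype.card (Submodule.span (ZMod 2) (X : Set G)) ≤ 2 ^ #X := by
  rw [Module.card_eq_pow_finrank (K := ZMod 2), ZMod.card]
  exact Nat.pow_le_pow_right two_pos (finrank_span_finset_le_card X)

section CharTwo

variable {G : Type*} [AddCommGroup G] [Module (ZMod 2) G] [Fintype G] [DecidableEq G]

lemma card_filter_abs_interTranslatesDeviation_ge_le_of_card_le {X : Finset G} {k : ℕ}
    (hXk : #X ≤ k) {δ : ℝ} (hδ0 : 0 ≤ δ) (hδ2 : δ ≤ 2) :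
    (#{a : Finset G | δ ≤ |interTranslatesDeviation a X|} : ℝ)
      ≤ 2 * 2 ^ Fintype.card G * exp (-δ ^ 2 * Fintype.card G / 2 ^ (k + 2)) := by
  set V := (Submodule.span (ZMod 2) (X : Set G)).toAddSubgroup
  refine (card_filter_abs_interTranslatesDeviation_ge_le V
    (fun x hx => Submodule.subset_span hx) hδ0 hδ2).trans ?_
  have hV : (Fintype.card V : ℝ) ≤ 2 ^ k := by
    exact_mod_cast (card_span_le X).trans (Nat.pow_le_pow_right two_pos hXk)
  have hV0 : (0 : ℝ) < Fintype.card V := by exact_mod_cast Fintype.card_pos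
  refine mul_le_mul_of_nonneg_left (exp_le_exp.mpr ?_) (by positivity)
  rw [neg_mul, neg_div, neg_div, neg_le_neg_iff]
  exact div_le_div_of_nonneg_left (by positivity) (by positivity) (by rw [pow_add]; linarith)

lemma exists_forall_card_le_abs_interTranslatesDeviation_lt {k : ℕ} {δ : ℝ} (hδ0 : 0 ≤ δ)
    (hδ2 : δ ≤ 2)
    (hG : 2 * (k + 1) * (Fintype.card G : ℝ) ^ k
      * exp (-δ ^ 2 * Fintype.card G / 2 ^ (k + 2)) < 1) :
    ∃ a : Finset G, ∀ X : Finset G, #X ≤ k → |interTranslatesDeviation a X| < δ := by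
  by_contra! hbad
  have hcover : (univ : Finset (Finset G)) ⊆ (univ.filter fun X : Finset G => #X ≤ k).biUnion
      fun X => univ.filter fun a => δ ≤ |interTranslatesDeviation a X| := by
    intro a _
    obtain ⟨X, hXk, hX⟩ := hbad a
    exact mem_biUnion.mpr ⟨X, by simpa using hXk, by simpa using hX⟩
  have hcard := (Nat.cast_le (α := ℝ)).mpr ((card_le_card hcover).trans card_biUnion_le)
  push_cast at hcard
  have hfamily : (#{X : Finset G | #X ≤ k} : ℝ) ≤ (k + 1) * Fintype.card G ^ k := by
    exact_mod_cast card_filter_card_le_le k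
  have hsum := sum_le_sum fun X (hX : X ∈ ({X : Finset G | #X ≤ k} : Finset _)) =>
    card_filter_abs_interTranslatesDeviation_ge_le_of_card_le (mem_filter.mp hX).2 hδ0 hδ2
  rw [card_univ, Fintype.card_finset, Nat.cast_pow, Nat.cast_two] at hcard
  rw [sum_const, nsmul_eq_mul] at hsum
  set E := exp (-δ ^ 2 * Fintype.card G / 2 ^ (k + 2))
  have h2G : (0 : ℝ) < 2 ^ Fintype.card G := by positivity
  have hlt : ((k : ℝ) + 1) * Fintype.card G ^ k * (2 * 2 ^ Fintype.card G * E)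
      < 2 ^ Fintype.card G := by
    rw [show ((k : ℝ) + 1) * Fintype.card G ^ k * (2 * 2 ^ Fintype.card G * E)
      = 2 ^ Fintype.card G * (2 * (k + 1) * Fintype.card G ^ k * E) by ring]
    exact mul_lt_of_lt_one_right h2G hG
  have hE : 0 ≤ 2 * 2 ^ Fintype.card G * E := by positivity
  linarith [mul_le_mul_of_nonneg_right hfamily hE]

end CharTwo

lemma eventually_mul_two_pow_pow_mul_exp_lt_one (k : ℕ) (C : ℝ) {c : ℝ} (hc : 0 < c) :
    ∀ᶠ N : ℕ in atTop, C * ((2 : ℝ) ^ N) ^ k * exp (-c * 2 ^ N) < 1 := by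
  have h := ((tendsto_rpow_mul_exp_neg_mul_atTop_nhds_zero k c hc).comp
    (tendsto_pow_atTop_atTop_of_one_lt one_lt_two)).const_mul C
  rw [mul_zero] at h
  filter_upwards [h.eventually (gt_mem_nhds one_pos)] with N hN
  simpa [mul_assoc, rpow_natCast] using hN

theorem stmt3 (k : ℕ) (δ : ℝ) (hδ : 0 < δ) :
    ∃ n : ℕ, ∀ (I : Type) [Fintype I] [DecidableEq I], n < Fintype.card I →
      ∃ a0 a1 : Finset (I → ZMod 2),
        a0 ∪ a1 = Finset.univ ∧ Disjoint a0 a1 ∧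
        ∀ X : Finset (I → ZMod 2), X.Nonempty → X.card ≤ k →
          |((Finset.univ.filter
              (fun t => ∀ x ∈ X, t ∈ a0.image (· + x))).card : ℝ) / 2 ^ Fintype.card I
            - (1 / 2 : ℝ) ^ X.card| < δ := by
  set δ' := min δ 2
  have hδ' : 0 < δ' := lt_min hδ two_pos
  obtain ⟨n, hn⟩ := eventually_atTop.mp (eventually_mul_two_pow_pow_mul_exp_lt_one k
    (2 * (k + 1)) (c := δ' ^ 2 / 2 ^ (k + 2)) (by positivity))
  refine ⟨n, fun I _ _ hI => ?_⟩
  have hcard : (Fintype.card (I → ZMod 2) : ℝ) = 2 ^ Fintype.card I := by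
    simp [ZMod.card]
  obtain ⟨a0, ha0⟩ := exists_forall_card_le_abs_interTranslatesDeviation_lt
    (G := I → ZMod 2) (k := k) hδ'.le (min_le_right δ 2) (by
      rw [hcard]
      convert hn _ hI.le using 3
      ring)
  refine ⟨a0, a0ᶜ, union_compl a0, disjoint_compl_right, fun X _ hXk => ?_⟩
  have hfilter : (univ.filter fun t => ∀ x ∈ X, t ∈ a0.image (· + x))
      = univ.filter fun t => ∀ x ∈ X, t - x ∈ a0 := by
    simp [sub_eq_add_neg]
  have h := (ha0 X hXk).trans_le (min_le_left δ 2)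
  rwa [interTranslatesDeviation, interTranslatesCard, hcard, ← hfilter] at h
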